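/- arXiv:2110.12382 — 6 statements merged into one kernel-verified Lean document; each statement's English description precedes it below -/
import Mathlib

section
/- Let G be a finite group, χ an irreducible complex character of G, and g ∈ G with conjugacy class K = g^G. If gcd(|K|, χ(1)) = 1, then either χ(g) = 0 or |χ(g)| = χ(1). -/
/-- `χ` is the character of some irreducible finite-dimensional complex representation
of the group `G`. -/
def IsIrredChar (G : Type) [Monoid G] (χ : G → ℂ) : Prop :=
  ∃ V : FDRep ℂ G, CategoryTheory.Simple V ∧ χ = FDRep.character V

/-!
By Schur's lemma the class sum of `K = g^G` acts on an irreducible module as the scalar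
`|K| χ(g) / χ(1)`, which is an algebraic integer because the class sum is integral over `ℤ`
(it lies in the image of the finite `ℤ`-algebra `ℤ[G]`). Since `χ(g)` is an algebraic integer
as well, Bézout for the coprime pair `|K|, χ(1)` shows that `α = χ(g) / χ(1)` is an algebraic
integer. But `α` is an average of `χ(1)` roots of unity, and so is each of its Galois conjugates;
hence all conjugates of `α` lie in the closed unit disc, and by Kronecker's theorem `α` is either
`0` or a root of unity.
-/

open CategoryTheory Polynomial

theorem IsIntegral.of_pow_eq_one {R A : Type*} [CommRing R] [Ring A] [Algebra R A] {x : A}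
    {n : ℕ} (hn : n ≠ 0) (hx : x ^ n = 1) : IsIntegral R x :=
  .of_pow (Nat.pos_of_ne_zero hn) (hx ▸ isIntegral_one)

theorem IsIntegral.div_natCast_of_coprime {F : Type*} [Field F] {x : F} {a d : ℕ}
    (hcop : a.Coprime d) (hax : IsIntegral ℤ (a * x / d)) (hx : IsIntegral ℤ x) :
    IsIntegral ℤ (x / d) := by
  rcases eq_or_ne (d : F) 0 with hd | hd
  · simpa [hd] using isIntegral_zero
  have hbezout : (a : F) * Nat.gcdA a d + d * Nat.gcdB a d = 1 := by
    have := (Nat.gcd_eq_gcd_ab a d).symm.trans (congrArg Nat.cast hcop)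
    exact_mod_cast congrArg (Int.cast : ℤ → F) this
  have : x / d = Nat.gcdA a d * (a * x / d) + Nat.gcdB a d * x := by
    field_simp
    linear_combination (-x) * hbezout
  rw [this]
  exact (isIntegral_algebraMap.mul hax).add (isIntegral_algebraMap.mul hx)

theorem MonoidHom.isIntegral_sum_apply {G A : Type*} [Monoid G] [Finite G] [Ring A]
    (ρ : G →* A) (s : Finset G) : IsIntegral ℤ (∑ g ∈ s, ρ g) := by
  have : ∑ g ∈ s, ρ g = MonoidAlgebra.lift ℤ A G ρ (∑ g ∈ s, MonoidAlgebra.of ℤ G g) := by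
    simp
  rw [this]
  exact (Algebra.IsIntegral.isIntegral _).map _

theorem Module.End.exists_multiset_pow_eq_one_trace_eq {K V : Type*} [Field K] [IsAlgClosed K]
    [AddCommGroup V] [Module K V] [FiniteDimensional K V] {f : Module.End K V} {n : ℕ}
    (hf : f ^ n = 1) :
    ∃ m : Multiset K, Multiset.card m = Module.finrank K V ∧ (∀ μ ∈ m, μ ^ n = 1) ∧
      LinearMap.trace K V f = m.sum := by
  refine ⟨f.charpoly.roots, ?_, fun μ hμ => ?_,
    trace_eq_sum_roots_charpoly_of_splits (IsAlgClosed.splits _)⟩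
  · rw [splits_iff_card_roots.mp (IsAlgClosed.splits _), LinearMap.charpoly_natDegree]
  · have hμ : f.HasEigenvalue μ :=
      (hasEigenvalue_iff_isRoot_charpoly f μ).mpr (isRoot_of_mem_roots hμ)
    obtain ⟨v, hv⟩ := (hμ.pow n).exists_hasEigenvector
    have hfv := hv.apply_eq_smul
    rw [hf, Module.End.one_apply] at hfv
    exact smul_left_injective K hv.2 (by simpa using hfv.symm)

theorem Multiset.norm_sum_le_card {E : Type*} [SeminormedAddCommGroup E] {m : Multiset E}
    (hm : ∀ z ∈ m, ‖z‖ ≤ 1) : ‖m.sum‖ ≤ Multiset.card m := by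
  calc ‖m.sum‖ ≤ (m.map norm).sum := norm_multiset_sum_le m
    _ ≤ Multiset.card (m.map norm) • 1 :=
        Multiset.sum_le_card_nsmul _ _ (by simpa using hm)
    _ = Multiset.card m := by simp

theorem Multiset.norm_sum_map_le_card_of_pow_eq_one {K : Type*} [Ring K] {m : Multiset K} {n : ℕ}
    (hn : n ≠ 0) (hm : ∀ z ∈ m, z ^ n = 1) (φ : K →+* ℂ) : ‖φ m.sum‖ ≤ Multiset.card m := by
  rw [map_multiset_sum, ← Multiset.card_map φ]
  refine Multiset.norm_sum_le_card fun w hw => ?_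
  obtain ⟨z, hz, rfl⟩ := Multiset.mem_map.mp hw
  exact (Complex.norm_eq_one_of_pow_eq_one (by rw [← map_pow, hm z hz, map_one]) hn).le

theorem NumberField.norm_embedding_eq_one_of_norm_le_one {K : Type*} [Field K] [NumberField K]
    {x : K} (hx₀ : x ≠ 0) (hxi : IsIntegral ℤ x) (hx : ∀ φ : K →+* ℂ, ‖φ x‖ ≤ 1)
    (φ : K →+* ℂ) : ‖φ x‖ = 1 := by
  obtain ⟨n, hn, hxn⟩ := Embeddings.pow_eq_one_of_norm_le_one K ℂ hx₀ hxi hx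
  exact Complex.norm_eq_one_of_pow_eq_one (by rw [← map_pow, hxn, map_one]) hn.ne'

theorem Multiset.sum_eq_zero_or_norm_sum_eq_card {m : Multiset ℂ} {n : ℕ} (hn : n ≠ 0)
    (hm : ∀ z ∈ m, z ^ n = 1) (hint : IsIntegral ℤ (m.sum / Multiset.card m)) :
    m.sum = 0 ∨ ‖m.sum‖ = Multiset.card m := by
  rcases eq_or_ne m 0 with rfl | hm0
  · exact .inl Multiset.sum_zero
  have hcard0 : (Multiset.card m : ℂ) ≠ 0 := by simpa using hm0
  let L := IntermediateField.adjoin ℚ (m.toFinset : Set ℂ)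
  have : FiniteDimensional ℚ L := IntermediateField.finiteDimensional_adjoin fun z hz =>
    .of_pow_eq_one hn (hm z (Multiset.mem_toFinset.mp hz))
  have : NumberField L := ⟨⟩
  obtain ⟨m', hm'⟩ : ∃ m' : Multiset L, m'.map L.val = m :=
    CanLift.prf (β := Multiset L) m fun z hz =>
      IntermediateField.subset_adjoin ℚ _ (Multiset.mem_toFinset.mpr hz)
  have hsum : L.val m'.sum = m.sum := by rw [map_multiset_sum, hm']
  have hcard : Multiset.card m' = Multiset.card m := by rw [← hm', Multiset.card_map]
  set x : L := m'.sum / Multiset.card m'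
  have hx : L.val x = m.sum / Multiset.card m := by simp [x, hsum, hcard]
  have hxi : IsIntegral ℤ x :=
    (isIntegral_algHom_iff (L.val.restrictScalars ℤ) L.val.injective).mp (hx ▸ hint)
  have hm'n : ∀ z ∈ m', z ^ n = 1 := fun z hz =>
    L.val.injective (by simpa using hm _ (hm' ▸ Multiset.mem_map_of_mem _ hz))
  have hconj : ∀ φ : L →+* ℂ, ‖φ x‖ ≤ 1 := fun φ =>
    calc ‖φ x‖ = ‖φ m'.sum‖ / Multiset.card m' := by simp [x]
      _ ≤ Multiset.card m' / Multiset.card m' := by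
          gcongr; exact Multiset.norm_sum_map_le_card_of_pow_eq_one hn hm'n φ
      _ ≤ 1 := div_self_le_one _
  rcases eq_or_ne x 0 with h0 | h0
  · rw [h0, _root_.map_zero, eq_comm, div_eq_zero_iff] at hx
    exact .inl (hx.resolve_right hcard0)
  · have := NumberField.norm_embedding_eq_one_of_norm_le_one h0 hxi hconj L.val
    rw [AlgHom.coe_toRingHom, hx, norm_div, Complex.norm_natCast,
      div_eq_one_iff_eq (by exact_mod_cast hcard0)] at this
    exact .inr this

namespace FDRep

variable {k G : Type*} [Field k]

theorem exists_eq_smul_one_of_commute [Monoid G] [IsAlgClosed k] (V : FDRep k G) [Simple V]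
    {T : Module.End k V} (hT : ∀ g, Commute T (V.ρ g)) : ∃ c : k, T = c • 1 := by
  let f : V ⟶ V := ⟨FGModuleCat.ofHom T, fun g => ?_⟩
  · obtain ⟨c, hc⟩ := endomorphism_simple_eq_smul_id k f
    exact ⟨c, (congrArg (fun φ : V ⟶ V => φ.hom.hom.hom) hc).symm⟩
  · ext v
    exact LinearMap.congr_fun (hT g) v

variable [Group G] [Fintype G] [DecidableEq G]

noncomputable def classSum (V : FDRep k G) (g : G) : Module.End k V :=
  ∑ h ∈ (conjugatesOf g).toFinset, V.ρ h

theorem commute_classSum (V : FDRep k G) (g x : G) : Commute (V.classSum g) (V.ρ x) := by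
  calc V.classSum g * V.ρ x = ∑ h ∈ (conjugatesOf g).toFinset, V.ρ (h * x) := by
        simp [classSum, Finset.sum_mul]
    _ = ∑ h ∈ (conjugatesOf g).toFinset, V.ρ (x * h * x⁻¹ * x) := by
        refine (Finset.sum_equiv (MulAut.conj x).toEquiv (fun h => ?_) (fun h _ => rfl)).symm
        have hconj : IsConj h (x * h * x⁻¹) := isConj_iff.mpr ⟨x, rfl⟩
        rw [Set.mem_toFinset, Set.mem_toFinset]
        exact ⟨fun hh => hh.trans hconj, fun hh => hh.trans hconj.symm⟩
    _ = V.ρ x * V.classSum g := by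
        simp [classSum, Finset.mul_sum]

theorem trace_classSum (V : FDRep k G) (g : G) :
    LinearMap.trace k V (V.classSum g) = Nat.card (conjugatesOf g) * V.character g := by
  have hconst : ∀ h ∈ (conjugatesOf g).toFinset, V.character h = V.character g := by
    intro h hh
    rw [Set.mem_toFinset] at hh
    obtain ⟨c, rfl⟩ := isConj_iff.mp hh
    exact V.char_conj g c
  rw [classSum, map_sum]
  change ∑ h ∈ (conjugatesOf g).toFinset, V.character h = _
  rw [Finset.sum_congr rfl hconst, Finset.sum_const, nsmul_eq_mul, Nat.card_eq_card_toFinset]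

theorem isIntegral_card_conjugatesOf_mul_character_div [IsAlgClosed k] (V : FDRep k G)
    [Simple V] (g : G) :
    IsIntegral ℤ (Nat.card (conjugatesOf g) * V.character g / V.character 1) := by
  obtain ⟨c, hc⟩ := V.exists_eq_smul_one_of_commute (V.commute_classSum g)
  have htrace : c * V.character 1 = Nat.card (conjugatesOf g) * V.character g := by
    rw [← V.trace_classSum, hc, char_one, map_smul, LinearMap.trace_one, smul_eq_mul]
  rcases eq_or_ne (V.character 1) 0 with h0 | h0
  · simpa [h0] using isIntegral_zero
  rw [← htrace, mul_div_cancel_right₀ _ h0]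
  have : Nontrivial V := Module.nontrivial_of_finrank_pos (R := k)
    (Nat.pos_of_ne_zero fun h => h0 (by rw [char_one, h, Nat.cast_zero]))
  have hT : IsIntegral ℤ (algebraMap k (Module.End k V) c) := by
    rw [Algebra.algebraMap_eq_smul_one, ← hc]
    exact V.ρ.isIntegral_sum_apply _
  exact (isIntegral_algHom_iff ((Algebra.ofId k _).restrictScalars ℤ)
    (algebraMap k (Module.End k V)).injective).mp hT

end FDRep

/-- If `χ` is an irreducible complex character of a finite group `G` of degree `d = χ 1`,
`g ∈ G` and the size of the conjugacy class of `g` is coprime to `d`, then either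
`χ g = 0` or `|χ g| = χ 1`. -/
theorem char_vanishing_or_central {G : Type} [Group G] [Fintype G]
    (χ : G → ℂ) (hχ : IsIrredChar G χ) (g : G)
    (d : ℕ) (hd : χ 1 = d)
    (hcop : Nat.Coprime (Nat.card {h : G | IsConj g h}) d) :
    χ g = 0 ∨ ‖χ g‖ = d := by
  classical
  obtain ⟨V, hV, rfl⟩ := hχ
  obtain ⟨m, hcard, hroots, htrace⟩ :=
    Module.End.exists_multiset_pow_eq_one_trace_eq (f := V.ρ g) (n := Fintype.card G)
      (by rw [← map_pow, pow_card_eq_one, map_one])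
  have hχg : V.character g = m.sum := htrace
  have hdm : Multiset.card m = d := by
    rw [hcard]; exact_mod_cast (FDRep.char_one V).symm.trans hd
  subst hdm
  have hint : IsIntegral ℤ (V.character g / Multiset.card m) :=
    .div_natCast_of_coprime hcop (hd ▸ V.isIntegral_card_conjugatesOf_mul_character_div g)
      (hχg ▸ .multiset_sum fun z hz => .of_pow_eq_one Fintype.card_ne_zero (hroots z hz))
  rw [hχg] at hint ⊢
  exact Multiset.sum_eq_zero_or_norm_sum_eq_card Fintype.card_ne_zero hroots hint
end

section
/- Let k be a field, G a finite group, N a normal subgroup of G, and V a simple k[G]-module that is finite-dimensional over k. Let U be any simple k[N]-submodule of the restriction of V to N. Then V = Σ_{g ∈ G} U·g (the sum of the translates of U by elements of g, each of which is a k[N]-submodule), and in particular the restriction of V to N is a semisimple k[N]-module. -/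
/-- **Clifford's theorem** (module version). Let `k` be a field, `G` a finite group,
`N` a normal subgroup of `G`, and `V` a simple `k[G]`-module, finite dimensional over `k`
(given by a representation `ρ` of `G` on `V`: the `k[G]`-submodules of `V` are exactly the
`G`-invariant `k`-subspaces, and similarly the `k[N]`-submodules are the `N`-invariant
`k`-subspaces). If `U` is a simple `k[N]`-submodule of the restriction of `V` to `N`, then
`V = Σ_{g ∈ G} U·g` (each translate `U·g` being a `k[N]`-submodule), and in particular the
restriction of `V` to `N` is a semisimple `k[N]`-module (every `k[N]`-submodule has a
`k[N]`-complement, which is Mathlib's definition of semisimplicity via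
`ComplementedLattice`). -/
theorem clifford_theorem_modules {k : Type*} [Field k] {G : Type*} [Group G] [Finite G]
    {V : Type*} [AddCommGroup V] [Module k V] [FiniteDimensional k V]
    (ρ : Representation k G V) (N : Subgroup G) [N.Normal]
    (hVnt : Nontrivial V)
    (hVsimple : ∀ W : Submodule k V, (∀ g : G, W.map (ρ g) ≤ W) → W = ⊥ ∨ W = ⊤)
    (U : Submodule k V) (hUne : U ≠ ⊥)
    (hUinv : ∀ n : ↥N, U.map (ρ (n : G)) ≤ U)
    (hUsimple : ∀ W : Submodule k V, W ≤ U → (∀ n : ↥N, W.map (ρ (n : G)) ≤ W) →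
      W = ⊥ ∨ W = U) :
    (⨆ g : G, U.map (ρ g)) = ⊤ ∧
      ∀ W : Submodule k V, (∀ n : ↥N, W.map (ρ (n : G)) ≤ W) →
        ∃ W' : Submodule k V, (∀ n : ↥N, W'.map (ρ (n : G)) ≤ W') ∧ IsCompl W W' := by
  -- basic translation lemmas
  have hmm : ∀ (W : Submodule k V) (g h : G),
      (W.map (ρ g)).map (ρ h) = W.map (ρ (h * g)) := fun W g h => by
    rw [← Submodule.map_comp, ← Module.End.mul_eq_comp, ← map_mul]
  have hone : ∀ W : Submodule k V, W.map (ρ 1) = W := fun W => by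
    rw [map_one, Module.End.one_eq_id, Submodule.map_id]
  -- Part 1
  have hsup : (⨆ g : G, U.map (ρ g)) = ⊤ := by
    rcases hVsimple (⨆ g : G, U.map (ρ g)) (fun h => by
      rw [Submodule.map_iSup]
      exact iSup_le fun g => by
        rw [hmm]
        exact le_iSup (fun g : G => U.map (ρ g)) (h * g)) with h | h
    · exfalso
      apply hUne
      have : U ≤ ⨆ g : G, U.map (ρ g) := by
        conv_lhs => rw [← hone U]
        exact le_iSup (fun g : G => U.map (ρ g)) 1
      rw [h, le_bot_iff] at this
      exact this
    · exact h
  refine ⟨hsup, ?_⟩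
  -- translates are N-invariant
  have hTinv : ∀ (g : G) (n : ↥N), (U.map (ρ g)).map (ρ (n : G)) ≤ U.map (ρ g) := by
    intro g n
    rw [hmm]
    have hn : g⁻¹ * (n : G) * g ∈ N := Subgroup.Normal.conj_mem' ‹N.Normal› _ n.2 g
    have : (n : G) * g = g * (g⁻¹ * (n : G) * g) := by group
    rw [this, ← hmm]
    exact Submodule.map_mono (hUinv ⟨_, hn⟩)
  -- translates are nonzero
  have hTne : ∀ g : G, U.map (ρ g) ≠ ⊥ := by
    intro g h
    apply hUne
    have := congrArg (Submodule.map (ρ g⁻¹)) h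
    rw [hmm, inv_mul_cancel, hone, Submodule.map_bot] at this
    exact this
  -- translates are simple
  have hTsimple : ∀ (g : G) (W : Submodule k V), W ≤ U.map (ρ g) →
      (∀ n : ↥N, W.map (ρ (n : G)) ≤ W) → W = ⊥ ∨ W = U.map (ρ g) := by
    intro g W hWle hWinv
    have hle : W.map (ρ g⁻¹) ≤ U := by
      have := Submodule.map_mono (f := ρ g⁻¹) hWle
      rwa [hmm, inv_mul_cancel, hone] at this
    have hinv : ∀ n : ↥N, (W.map (ρ g⁻¹)).map (ρ (n : G)) ≤ W.map (ρ g⁻¹) := by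
      intro n
      rw [hmm]
      have hn : g * (n : G) * g⁻¹ ∈ N := Subgroup.Normal.conj_mem ‹N.Normal› _ n.2 g
      have : (n : G) * g⁻¹ = g⁻¹ * (g * (n : G) * g⁻¹) := by group
      rw [this, ← hmm]
      exact Submodule.map_mono (hWinv ⟨_, hn⟩)
    rcases hUsimple _ hle hinv with h | h
    · left
      have := congrArg (Submodule.map (ρ g)) h
      rwa [hmm, mul_inv_cancel, hone, Submodule.map_bot] at this
    · right
      have := congrArg (Submodule.map (ρ g)) h
      rwa [hmm, mul_inv_cancel, hone] at this
  -- Part 2: complements by induction on codimension margin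
  intro W hWinv
  suffices h : ∀ (m : ℕ) (W' : Submodule k V), (∀ n : ↥N, W'.map (ρ (n : G)) ≤ W') →
      W ⊓ W' = ⊥ → Module.finrank k V ≤ Module.finrank k ↥(W ⊔ W') + m →
      ∃ W'' : Submodule k V, (∀ n : ↥N, W''.map (ρ (n : G)) ≤ W'') ∧ IsCompl W W'' by
    refine h (Module.finrank k V) ⊥ (fun n => by simp) (by simp) (by
      exact Nat.le_add_left _ _)
  intro m
  induction m with
  | zero =>
    intro W' hW'inv hdisj hrk
    refine ⟨W', hW'inv, ⟨disjoint_iff.2 hdisj, codisjoint_iff.2 ?_⟩⟩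
    exact Submodule.eq_top_of_finrank_eq (le_antisymm (Submodule.finrank_le _)
      (by simpa using hrk))
  | succ m ih =>
    intro W' hW'inv hdisj hrk
    by_cases htop : W ⊔ W' = ⊤
    · exact ⟨W', hW'inv, ⟨disjoint_iff.2 hdisj, codisjoint_iff.2 htop⟩⟩
    · -- find a translate not inside W ⊔ W'
      have : ¬ (⨆ g : G, U.map (ρ g)) ≤ W ⊔ W' := by
        rw [hsup]
        intro h
        exact htop (top_le_iff.1 h)
      obtain ⟨g, hg⟩ : ∃ g : G, ¬ U.map (ρ g) ≤ W ⊔ W' := by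
        by_contra h
        push_neg at h
        exact this (iSup_le h)
      set T := U.map (ρ g) with hT
      have hTD : T ⊓ (W ⊔ W') = ⊥ := by
        rcases hTsimple g (T ⊓ (W ⊔ W')) inf_le_left (fun n => by
          refine le_inf ?_ ?_
          · exact le_trans (Submodule.map_mono inf_le_left) (hTinv g n)
          · refine le_trans (Submodule.map_mono inf_le_right) ?_
            rw [Submodule.map_sup]
            exact sup_le_sup (hWinv n) (hW'inv n)) with h | h
        · exact h
        · exact absurd (by rw [hT, ← h]; exact inf_le_right : T ≤ W ⊔ W') hg
      refine ih (W' ⊔ T) (fun n => by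
        rw [Submodule.map_sup]
        exact sup_le_sup (hW'inv n) (hTinv g n)) ?_ ?_
      · -- W ⊓ (W' ⊔ T) = ⊥
        rw [eq_bot_iff]
        rintro x ⟨hxW, hxs⟩
        obtain ⟨w', hw', u, hu, rfl⟩ := Submodule.mem_sup.1 hxs
        have huD : u ∈ T ⊓ (W ⊔ W') := by
          refine ⟨hu, ?_⟩
          have : u = (w' + u) - w' := by abel
          rw [this]
          exact Submodule.sub_mem _ (Submodule.mem_sup_left hxW)
            (Submodule.mem_sup_right hw')
        rw [hTD] at huD
        simp only [Submodule.mem_bot] at huD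
        subst huD
        have : w' + 0 ∈ W ⊓ W' := ⟨hxW, by simpa using hw'⟩
        rw [hdisj] at this
        exact this
      · -- rank estimate
        have hsupT : W ⊔ (W' ⊔ T) = (W ⊔ W') ⊔ T := by rw [sup_assoc]
        rw [hsupT]
        have hrT : 0 < Module.finrank k ↥T :=
          Module.finrank_pos_iff.2 (Submodule.nontrivial_iff_ne_bot.2 (hTne g))
        have hadd : Module.finrank k ↥((W ⊔ W') ⊔ T) + Module.finrank k ↥((W ⊔ W') ⊓ T)
            = Module.finrank k ↥(W ⊔ W') + Module.finrank k ↥T :=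
          Submodule.finrank_sup_add_finrank_inf_eq _ _
        rw [inf_comm, hTD, finrank_bot] at hadd
        omega
end

section
/- Let G be a finite group, H and K subgroups of G, and T a complete set of representatives of the double cosets HtK of G with respect to H and K. Let φ be a complex class function on H. Then the restriction to K of the induced class function φ^G equals Σ_{t ∈ T} ((φ^t)_{t⁻¹Ht ∩ K})^K, where φ^t is the class function on t⁻¹Ht defined by φ^t(t⁻¹ht) = φ(h) for h ∈ H. -/
open scoped Classical

/-- The class function on `G` induced from a function `φ` on a subgroup `H`:
`φ^G g = (1/|H|) ∑_{x ∈ G, x g x⁻¹ ∈ H} φ (x g x⁻¹)`. -/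
noncomputable def indClassFun {G : Type*} [Group G] [Fintype G]
    (H : Subgroup G) (φ : ↥H → ℂ) : G → ℂ :=
  fun g => (Nat.card ↥H : ℂ)⁻¹ *
    ∑ x : G, if h : x * g * x⁻¹ ∈ H then φ ⟨x * g * x⁻¹, h⟩ else 0

/-- The conjugate subgroup `t⁻¹ H t = {y : G | t * y * t⁻¹ ∈ H}`. -/
def conjSubgroup {G : Type*} [Group G] (t : G) (H : Subgroup G) : Subgroup G where
  carrier := {y : G | t * y * t⁻¹ ∈ H}
  one_mem' := by simpa using H.one_mem
  mul_mem' := by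
    intro a b ha hb
    simpa [mul_assoc] using H.mul_mem ha hb
  inv_mem' := by
    intro a ha
    simpa [mul_assoc, mul_inv_rev] using H.inv_mem ha

/-- The conjugate `φ^t` on `t⁻¹ H t` of a function `φ` on `H`, so that
`φ^t (t⁻¹ h t) = φ h`. -/
def conjFun {G : Type*} [Group G] (H : Subgroup G) (t : G) (φ : ↥H → ℂ) :
    ↥(conjSubgroup t H) → ℂ :=
  fun y => φ ⟨t * (y : G) * t⁻¹, y.2⟩

/-- **Mackey's formula.** Let `H`, `K` be subgroups of a finite group `G` and `T` a
complete set of representatives of the double cosets `HtK` of `G`.  For every complex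
class function `φ` on `H`, the restriction to `K` of the induced class function `φ^G`
equals `∑_{t ∈ T} ((φ^t)_{t⁻¹Ht ∩ K})^K`. -/
theorem mackey_formula {G : Type*} [Group G] [Fintype G]
    (H K : Subgroup G) (φ : ↥H → ℂ)
    (hφ : ∀ x a : ↥H, φ (x * a * x⁻¹) = φ a)
    (T : Finset G)
    (hT : ∀ g : G, ∃! t : G, t ∈ T ∧ ∃ h ∈ H, ∃ k ∈ K, g = h * t * k) :
    ∀ x : ↥K, indClassFun H φ (x : G) =
      ∑ t ∈ T, indClassFun ((conjSubgroup t H).subgroupOf K)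
        (fun y => conjFun H t φ ⟨((y : ↥K) : G), y.2⟩) x := by
  intro x
  classical
  set τ : G → G := fun g => (hT g).choose with hτdef
  have hτT : ∀ g : G, τ g ∈ T := fun g => ((hT g).choose_spec.1).1
  have hτg : ∀ g : G, ∃ h ∈ H, ∃ k ∈ K, g = h * τ g * k :=
    fun g => ((hT g).choose_spec.1).2
  have hτu : ∀ (g t : G), t ∈ T → (∃ h ∈ H, ∃ k ∈ K, g = h * t * k) → τ g = t :=
    fun g t ht hex => ((hT g).choose_spec.2 t ⟨ht, hex⟩).symm
  set f : G → ℂ := fun g =>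
    if hg : g * (x : G) * g⁻¹ ∈ H then φ ⟨g * (x : G) * g⁻¹, hg⟩ else 0 with hfdef
  -- abbreviations
  have hHpos : ((Nat.card ↥H : ℂ)) ≠ 0 := by
    exact_mod_cast (Nat.card_pos (α := ↥H)).ne'
  -- the key identity for each t ∈ T
  have key : ∀ t ∈ T,
      (Nat.card ↥H : ℂ)⁻¹ * ∑ g ∈ Finset.univ.filter (fun g => τ g = t), f g =
      indClassFun ((conjSubgroup t H).subgroupOf K)
        (fun y => conjFun H t φ ⟨((y : ↥K) : G), y.2⟩) x := by
    intro t ht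
    set L : Subgroup ↥K := (conjSubgroup t H).subgroupOf K with hLdef
    have hLpos : ((Nat.card ↥L : ℂ)) ≠ 0 := by
      exact_mod_cast (Nat.card_pos (α := ↥L)).ne'
    set S : ℂ := ∑ k : ↥K, if hc : k * x * k⁻¹ ∈ L then
        (fun y : ↥L => conjFun H t φ ⟨((y : ↥K) : G), y.2⟩) ⟨k * x * k⁻¹, hc⟩ else 0
      with hSdef
    have hind : indClassFun L (fun y : ↥L => conjFun H t φ ⟨((y : ↥K) : G), y.2⟩) x
        = (Nat.card ↥L : ℂ)⁻¹ * S := rfl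
    -- the pair sum
    have e1 : ∑ p : ↥H × ↥K, f ((p.1 : G) * t * (p.2 : G)) = (Nat.card ↥H : ℂ) * S := by
      rw [Fintype.sum_prod_type]
      have hrow : ∀ h : ↥H, ∑ k : ↥K, f ((h : G) * t * (k : G)) = S := by
        intro h
        rw [hSdef]
        refine Finset.sum_congr rfl fun k _ => ?_
        have hmem : ((h : G) * t * (k : G)) * (x : G) * ((h : G) * t * (k : G))⁻¹ ∈ H
            ↔ k * x * k⁻¹ ∈ L := by
          have h1 : ((h : G) * t * (k : G)) * (x : G) * ((h : G) * t * (k : G))⁻¹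
              = (h : G) * (t * ((k : G) * (x : G) * (k : G)⁻¹) * t⁻¹) * (h : G)⁻¹ := by
            group
          rw [h1, mul_mem_cancel_right (H.inv_mem h.2), mul_mem_cancel_left h.2]
          rw [hLdef, Subgroup.mem_subgroupOf]
          rfl
        simp only [hfdef]
        by_cases hc : k * x * k⁻¹ ∈ L
        · rw [dif_pos hc, dif_pos (hmem.mpr hc)]
          have hw : t * (((k * x * k⁻¹ : ↥K) : G)) * t⁻¹ ∈ H := hc
          have hh := hφ h ⟨t * (((k * x * k⁻¹ : ↥K) : G)) * t⁻¹, hw⟩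
          show φ ⟨(h : G) * t * (k : G) * (x : G) * ((h : G) * t * (k : G))⁻¹, hmem.mpr hc⟩
              = φ (⟨t * (((k * x * k⁻¹ : ↥K) : G)) * t⁻¹, hw⟩ : ↥H)
          rw [← hh]
          congr 1
          ext
          push_cast
          group
        · rw [dif_neg hc, dif_neg (fun hh => hc (hmem.mp hh))]
      rw [Finset.sum_congr rfl fun h _ => hrow h, Finset.sum_const, Finset.card_univ,
        nsmul_eq_mul, Nat.card_eq_fintype_card]
    -- fiber counting
    have e2 : ∑ p : ↥H × ↥K, f ((p.1 : G) * t * (p.2 : G)) =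
        (Nat.card ↥L : ℂ) * ∑ g ∈ Finset.univ.filter (fun g => τ g = t), f g := by
      rw [← Finset.sum_fiberwise Finset.univ (fun p : ↥H × ↥K => (p.1 : G) * t * (p.2 : G))
        (fun p => f ((p.1 : G) * t * (p.2 : G)))]
      have hinner : ∀ g : G,
          ∑ p ∈ Finset.univ.filter (fun p : ↥H × ↥K => (p.1 : G) * t * (p.2 : G) = g),
            f ((p.1 : G) * t * (p.2 : G))
          = ((Finset.univ.filter
              (fun p : ↥H × ↥K => (p.1 : G) * t * (p.2 : G) = g)).card : ℂ) * f g := by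
        intro g
        rw [Finset.sum_congr rfl (fun p hp => by
          rw [(Finset.mem_filter.mp hp).2]), Finset.sum_const, nsmul_eq_mul]
      rw [Finset.sum_congr rfl fun g _ => hinner g]
      rw [Finset.mul_sum, Finset.sum_filter]
      refine Finset.sum_congr rfl fun g _ => ?_
      by_cases hgt : τ g = t
      · rw [if_pos hgt]
        obtain ⟨h₀, hh₀, k₀, hk₀, hg⟩ := hτg g
        rw [hgt] at hg
        have hcard : (Finset.univ.filter
            (fun p : ↥H × ↥K => (p.1 : G) * t * (p.2 : G) = g)).card
            = (Finset.univ.filter (fun y : ↥K => y ∈ L)).card := by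
          refine Finset.card_bij'
            (i := fun p hp => p.2 * ⟨k₀, hk₀⟩⁻¹)
            (j := fun y hy => (⟨h₀ * (t * (y : G)⁻¹ * t⁻¹), ?_⟩, y * ⟨k₀, hk₀⟩))
            ?_ ?_ ?_ ?_
          · have hy' : t * (y : G) * t⁻¹ ∈ H :=
              Subgroup.mem_subgroupOf.mp (Finset.mem_filter.mp hy).2
            have : t * (y : G)⁻¹ * t⁻¹ = (t * (y : G) * t⁻¹)⁻¹ := by group
            rw [this]
            exact H.mul_mem hh₀ (H.inv_mem hy')
          · intro p hp
            have hpg : (p.1 : G) * t * (p.2 : G) = g := (Finset.mem_filter.mp hp).2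
            refine Finset.mem_filter.mpr ⟨Finset.mem_univ _, ?_⟩
            rw [hLdef, Subgroup.mem_subgroupOf]
            show t * ((p.2 : G) * k₀⁻¹) * t⁻¹ ∈ H
            have : t * ((p.2 : G) * k₀⁻¹) * t⁻¹ = (p.1 : G)⁻¹ * h₀ := by
              have : (p.2 : G) = t⁻¹ * (p.1 : G)⁻¹ * (h₀ * t * k₀) := by
                rw [← hg, ← hpg]; group
              rw [this]; group
            rw [this]
            exact H.mul_mem (H.inv_mem p.1.2) hh₀
          · intro y hy
            refine Finset.mem_filter.mpr ⟨Finset.mem_univ _, ?_⟩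
            show (h₀ * (t * (y : G)⁻¹ * t⁻¹)) * t * ((y : G) * k₀) = g
            rw [hg]; group
          · intro p hp
            have hpg : (p.1 : G) * t * (p.2 : G) = g := (Finset.mem_filter.mp hp).2
            refine Prod.ext ?_ ?_
            · ext
              show h₀ * (t * (((p.2 * ⟨k₀, hk₀⟩⁻¹ : ↥K) : G))⁻¹ * t⁻¹) = (p.1 : G)
              push_cast
              have : (p.1 : G) = g * ((p.2 : G))⁻¹ * t⁻¹ := by rw [← hpg]; group
              rw [this, hg]; group
            · ext
              show ((p.2 : G) * k₀⁻¹) * k₀ = (p.2 : G)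
              group
          · intro y hy
            ext
            show ((y : G) * k₀) * k₀⁻¹ = (y : G)
            group
        rw [hcard]
        congr 2
        rw [Nat.card_eq_fintype_card, Fintype.card_subtype]
      · rw [if_neg hgt]
        have hempty : (Finset.univ.filter
            (fun p : ↥H × ↥K => (p.1 : G) * t * (p.2 : G) = g)) = ∅ := by
          refine Finset.filter_eq_empty_iff.mpr fun p _ hpg => ?_
          exact hgt (hτu g t ht ⟨(p.1 : G), p.1.2, (p.2 : G), p.2.2, hpg.symm⟩)
        rw [hempty]
        simp
    -- combine
    rw [hind]
    have hLB : (Nat.card ↥L : ℂ) * ∑ g ∈ Finset.univ.filter (fun g => τ g = t), f g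
        = (Nat.card ↥H : ℂ) * S := by rw [← e1, ← e2]
    have h3 : S = (Nat.card ↥H : ℂ)⁻¹ *
        ((Nat.card ↥L : ℂ) * ∑ g ∈ Finset.univ.filter (fun g => τ g = t), f g) := by
      rw [hLB, inv_mul_cancel_left₀ hHpos]
    rw [h3, mul_left_comm ((Nat.card ↥L : ℂ))⁻¹, inv_mul_cancel_left₀ hLpos]
  -- assemble
  have hLHS : indClassFun H φ (x : G) = (Nat.card ↥H : ℂ)⁻¹ * ∑ g : G, f g := rfl
  rw [hLHS, ← Finset.sum_fiberwise_of_maps_to (fun g _ => hτT g) f, Finset.mul_sum]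
  exact Finset.sum_congr rfl key
end

section
/- Let G be a finite group, g ∈ G, and p a prime number. Then there exists a p-quasielementary subgroup Q ≤ G such that the integer value (1_Q)^G(g) of the induced character of the trivial character of Q is not divisible by p. -/
open scoped Classical

/-- A group `Q` is `p`-quasielementary if it has a normal cyclic subgroup `A` of order
prime to `p` such that `Q ⧸ A` is a `p`-group. -/
def IsPQuasiElementary (p : ℕ) (Q : Type*) [Group Q] : Prop :=
  ∃ A : Subgroup Q, ∃ hA : A.Normal,
    IsCyclic ↥A ∧ Nat.Coprime (Nat.card ↥A) p ∧
    @IsPGroup p (Q ⧸ A) (@QuotientGroup.Quotient.group Q _ A hA)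

/-!
Let `z = g ^ (p ^ e)`, where `p ^ e` is the `p`-part of the order of `g`: then `z` has order prime
to `p` and `g` is a `p`-element modulo `⟨z⟩`. In `N = N_G(⟨z⟩)` take a Sylow `p`-subgroup `P` of
`N ⧸ ⟨z⟩` containing the image `ḡ` of `g`, and let `Q` be its preimage, which is
`p`-quasielementary with cyclic part `⟨z⟩`. The value `1_Q^G(g)` is the number of cosets of `Q`
fixed by `g`. If `g` fixes `xQ`, then `x⁻¹ z x ∈ Q` has order prime to `p`, hence lies in `⟨z⟩`,
so `x ∈ N`. The fixed cosets are therefore those of `(N ⧸ ⟨z⟩) ⧸ P` fixed by the `p`-group `⟨ḡ⟩`,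
and their number is congruent mod `p` to `[N ⧸ ⟨z⟩ : P]`, which is prime to `p`.
-/

section

variable {G : Type*} [Group G] {p : ℕ}

theorem conj_inv_pow (x z : G) (n : ℕ) : (x⁻¹ * z * x) ^ n = x⁻¹ * z ^ n * x := by
  simpa using conj_pow (a := x⁻¹) (b := z) (i := n)

theorem IsPGroup.eq_one_of_pow_eq_one (hG : IsPGroup p G) {m : ℕ} (hm : m.Coprime p) {g : G}
    (hg : g ^ m = 1) : g = 1 :=
  orderOf_eq_one_iff.1 <|
    Nat.Coprime.eq_one_of_dvd (hG.orderOf_coprime hm.symm g) (orderOf_dvd_of_pow_eq_one hg)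

theorem Sylow.not_dvd_card_fixedPoints_of_mem [Finite G] [Fact p.Prime] (P : Sylow p G) {g : G}
    (hg : g ∈ P) : ¬ p ∣ Nat.card {c : G ⧸ (P : Subgroup G) // g • c = c} := by
  have hfix : MulAction.fixedPoints (Subgroup.zpowers g) (G ⧸ (P : Subgroup G)) =
      {c | g • c = c} := by
    ext c
    refine ⟨fun h => h ⟨g, Subgroup.mem_zpowers g⟩, fun h x => ?_⟩
    exact Subgroup.zpowers_le.2 (MulAction.mem_stabilizer_iff.2 h) x.2
  have hmod := (P.2.to_le (Subgroup.zpowers_le.2 hg)).card_modEq_card_fixedPoints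
    (G ⧸ (P : Subgroup G))
  rw [hfix, ← Subgroup.index_eq_card] at hmod
  exact fun hdvd => P.not_dvd_index ((hmod.dvd_iff dvd_rfl).2 hdvd)

theorem IsPQuasiElementary.of_mulEquiv {Q R : Type*} [Group Q] [Group R]
    (hQ : IsPQuasiElementary p Q) (e : Q ≃* R) : IsPQuasiElementary p R := by
  obtain ⟨A, hA, hcyc, hcop, hpg⟩ := hQ
  have hAe := hA.map e.toMonoidHom e.surjective
  refine ⟨A.map e.toMonoidHom, hAe, ?_, ?_, ?_⟩
  · exact isCyclic_of_surjective _ (A.equivMapOfInjective _ e.injective).surjective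
  · rwa [Subgroup.card_map_of_injective e.injective]
  · exact hpg.of_equiv (QuotientGroup.congr A _ e rfl)

theorem isPQuasiElementary_comap_mk (K : Subgroup G) [K.Normal] [IsCyclic K]
    (hK : (Nat.card K).Coprime p) {P : Subgroup (G ⧸ K)} (hP : IsPGroup p P) :
    IsPQuasiElementary p (P.comap (QuotientGroup.mk' K)) := by
  have hKQ : K ≤ P.comap (QuotientGroup.mk' K) :=
    (QuotientGroup.ker_mk' K).symm.le.trans (MonoidHom.ker_le_comap _ P)
  refine ⟨K.subgroupOf _, inferInstance, ?_, ?_, ?_⟩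
  · exact isCyclic_of_surjective _ (K.subgroupOfEquivOfLe hKQ).symm.surjective
  · rwa [Nat.card_congr (K.subgroupOfEquivOfLe hKQ).toEquiv]
  · intro q
    obtain ⟨q, rfl⟩ := QuotientGroup.mk_surjective q
    obtain ⟨k, hk⟩ := hP ⟨_, q.2⟩
    refine ⟨k, ?_⟩
    rw [← QuotientGroup.mk_pow, QuotientGroup.eq_one_iff, Subgroup.mem_subgroupOf,
      Subgroup.coe_pow, ← QuotientGroup.eq_one_iff]
    simpa using congrArg Subtype.val hk

namespace Subgroup

theorem card_subtype_mk (H : Subgroup G) (P : G ⧸ H → Prop) :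
    Nat.card {x : G // P x} = Nat.card {c : G ⧸ H // P c} * Nat.card H := by
  rw [← Nat.card_prod]
  exact Nat.card_congr <| (groupEquivQuotientProdSubgroup.subtypeEquiv fun _ => Iff.rfl).trans
    Equiv.prodSubtypeFstEquivSubtypeProd

theorem smul_mk_eq_mk_iff (H : Subgroup G) (g x : G) :
    g • (x : G ⧸ H) = x ↔ x⁻¹ * g * x ∈ H := by
  rw [MulAction.Quotient.smul_mk, QuotientGroup.eq, smul_eq_mul, ← inv_mem_iff]
  group

theorem card_conj_mem (H : Subgroup G) (g : G) :
    Nat.card {x : G // x⁻¹ * g * x ∈ H} = Nat.card {c : G ⧸ H // g • c = c} * Nat.card H := by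
  simp_rw [← smul_mk_eq_mk_iff]
  exact card_subtype_mk H fun c => g • c = c

theorem card_conj_mem_comap_mk (K : Subgroup G) [K.Normal] (P : Subgroup (G ⧸ K)) (g : G) :
    Nat.card {x : G // x⁻¹ * g * x ∈ P.comap (QuotientGroup.mk' K)} =
      Nat.card {y : G ⧸ K // y⁻¹ * g * y ∈ P} * Nat.card K :=
  card_subtype_mk K fun y => y⁻¹ * g * y ∈ P

theorem card_comap_mk (K : Subgroup G) [K.Normal] (P : Subgroup (G ⧸ K)) :
    Nat.card (P.comap (QuotientGroup.mk' K)) = Nat.card P * Nat.card K :=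
  card_subtype_mk K fun y => y ∈ P

theorem card_conj_mem_map_subtype {N : Subgroup G} (H : Subgroup N) (g : N)
    (hN : ∀ x : G, x⁻¹ * g * x ∈ H.map N.subtype → x ∈ N) :
    Nat.card {x : G // x⁻¹ * g * x ∈ H.map N.subtype} =
      Nat.card {x : N // x⁻¹ * g * x ∈ H} := by
  refine Nat.card_congr ((Equiv.subtypeSubtypeEquivSubtype fun {x} h => hN x h).symm.trans ?_)
  refine Equiv.subtypeEquiv (Equiv.refl N) fun y => ?_
  rw [← mem_map_iff_mem N.subtype_injective]
  rfl

theorem card_fixedPoints_map_comap_mk [Finite G] {N : Subgroup G} (K : Subgroup N) [K.Normal]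
    (P : Subgroup (N ⧸ K)) (g : N)
    (hN : ∀ x : G, x⁻¹ * g * x ∈ (P.comap (QuotientGroup.mk' K)).map N.subtype → x ∈ N) :
    Nat.card {c : G ⧸ (P.comap (QuotientGroup.mk' K)).map N.subtype // (g : G) • c = c} =
      Nat.card {c : (N ⧸ K) ⧸ P // (g : N ⧸ K) • c = c} := by
  set Q := (P.comap (QuotientGroup.mk' K)).map N.subtype
  -- both sides, multiplied by `|Q| = |P| |K|`, count the `x : G` with `x⁻¹ g x ∈ Q`
  have hQ : Nat.card Q = Nat.card P * Nat.card K := by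
    rw [card_map_of_injective N.subtype_injective, card_comap_mk]
  have hcount := card_conj_mem Q g
  rw [card_conj_mem_map_subtype _ g hN, card_conj_mem_comap_mk, card_conj_mem, hQ,
    mul_assoc] at hcount
  exact (Nat.eq_of_mul_eq_mul_right (Nat.card_pos.trans_eq hQ) hcount).symm

theorem mem_of_mem_comap_mk_of_pow_eq_one (K : Subgroup G) [K.Normal]
    {P : Subgroup (G ⧸ K)} (hP : IsPGroup p P) {m : ℕ} (hm : m.Coprime p) {y : G}
    (hy : y ∈ P.comap (QuotientGroup.mk' K)) (hym : y ^ m = 1) : y ∈ K := by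
  have hmk := hP.eq_one_of_pow_eq_one (g := ⟨_, hy⟩) hm
    (Subtype.ext (by simp [← QuotientGroup.mk_pow, hym]))
  exact (QuotientGroup.eq_one_iff y).1 (congrArg Subtype.val hmk)

theorem mem_normalizer_zpowers_of_conj_mem [Finite G] {z x : G}
    (h : x⁻¹ * z * x ∈ zpowers z) : x ∈ normalizer (zpowers z : Set G) := by
  rw [← inv_mem_iff, mem_normalizer_iff_map_conj_eq]
  have hle : (zpowers z).map (MulAut.conj x⁻¹).toMonoidHom ≤ zpowers z := by
    rw [MonoidHom.map_zpowers, zpowers_le]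
    simpa using h
  exact eq_of_le_of_card_ge hle (card_map_of_injective (MulAut.conj x⁻¹).injective).ge

theorem mem_normalizer_of_conj_mem_map_comap [Finite G] {z : G} (hz : (orderOf z).Coprime p)
    {N : Subgroup G} [((zpowers z).subgroupOf N).Normal]
    {P : Subgroup (N ⧸ (zpowers z).subgroupOf N)} (hP : IsPGroup p P) {x : G}
    (hx : x⁻¹ * z * x ∈ (P.comap (QuotientGroup.mk' _)).map N.subtype) :
    x ∈ normalizer (zpowers z : Set G) := by
  obtain ⟨y, hy, hyx⟩ := hx
  have hy1 : y ^ orderOf z = 1 := by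
    ext
    rw [coe_pow, show (y : G) = x⁻¹ * z * x from hyx, conj_inv_pow, pow_orderOf_eq_one]
    simp
  have hyK : y ∈ (zpowers z).subgroupOf N := mem_of_mem_comap_mk_of_pow_eq_one _ hP hz hy hy1
  exact mem_normalizer_zpowers_of_conj_mem (hyx ▸ mem_subgroupOf.1 hyK)

end Subgroup

theorem isPGroup_zpowers_of_pow_eq_one {g : G} {n : ℕ} (hg : g ^ p ^ n = 1) :
    IsPGroup p (Subgroup.zpowers g) := by
  rintro ⟨_, k, rfl⟩
  refine ⟨n, Subtype.ext ?_⟩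
  change (g ^ k) ^ p ^ n = 1
  rw [← zpow_natCast, ← zpow_mul, mul_comm, zpow_mul, zpow_natCast, hg, one_zpow]

open Subgroup in
theorem exists_isPQuasiElementary_not_dvd_card_fixedPoints [Finite G] (g : G) (hp : p.Prime) :
    ∃ Q : Subgroup G, IsPQuasiElementary p Q ∧ ¬ p ∣ Nat.card {c : G ⧸ Q // g • c = c} := by
  have := Fact.mk hp
  set q := ordProj[p] (orderOf g)
  set z := g ^ q
  have hz : (orderOf z).Coprime p := by
    rw [orderOf_pow_of_dvd (pow_ne_zero _ hp.ne_zero) (Nat.ordProj_dvd _ _)]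
    exact (Nat.coprime_ordCompl hp (orderOf_pos g).ne').symm
  set N := normalizer (zpowers z : Set G)
  set K := (zpowers z).subgroupOf N
  have hgN : g ∈ N := centralizer_le_normalizer _ <| mem_centralizer_iff.2 fun h hh => by
    obtain ⟨k, rfl⟩ := mem_zpowers_iff.1 hh
    exact (((Commute.refl g).pow_left q).zpow_left k).eq
  set gN : N := ⟨g, hgN⟩
  obtain ⟨P, hgP⟩ : ∃ P : Sylow p (N ⧸ K), (gN : N ⧸ K) ∈ P := by
    have hgq : (gN : N ⧸ K) ^ q = 1 := by
      rw [← QuotientGroup.mk_pow, QuotientGroup.eq_one_iff]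
      exact mem_subgroupOf.2 (mem_zpowers z)
    obtain ⟨P, hP⟩ := (isPGroup_zpowers_of_pow_eq_one hgq).exists_le_sylow
    exact ⟨P, hP (mem_zpowers _)⟩
  have hKZ : K ≃* zpowers z := subgroupOfEquivOfLe le_normalizer
  have hKcyc : IsCyclic K := isCyclic_of_surjective _ hKZ.symm.surjective
  have hK : (Nat.card K).Coprime p := by rwa [Nat.card_congr hKZ.toEquiv, Nat.card_zpowers]
  refine ⟨_, (isPQuasiElementary_comap_mk K hK P.2).of_mulEquiv
    (equivMapOfInjective _ _ N.subtype_injective), ?_⟩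
  rw [card_fixedPoints_map_comap_mk K P gN fun x hx => ?_]
  · exact P.not_dvd_card_fixedPoints_of_mem hgP
  · refine mem_normalizer_of_conj_mem_map_comap hz P.2 ?_
    simpa [z, conj_inv_pow] using pow_mem hx q

theorem indClassFun_one_eq_card_fixedPoints [Fintype G] (H : Subgroup G) (g : G) :
    indClassFun H (fun _ => 1) g = Nat.card {c : G ⧸ H // g • c = c} := by
  have hsum : ∑ x : G, (if x * g * x⁻¹ ∈ H then (1 : ℂ) else 0) =
      Nat.card {x : G // x⁻¹ * g * x ∈ H} := by
    rw [Fintype.sum_equiv (Equiv.inv G) _ (fun x => if x⁻¹ * g * x ∈ H then 1 else 0)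
      fun x => by simp, Finset.sum_boole, Nat.card_eq_fintype_card, Fintype.card_subtype]
  have hH : (Nat.card H : ℂ) ≠ 0 := Nat.cast_ne_zero.2 Nat.card_pos.ne'
  rw [indClassFun, ← Finset.sum_congr rfl fun x _ => (dite_eq_ite ..).symm, hsum,
    H.card_conj_mem, Nat.cast_mul]
  field_simp

end

/-- For every `g` in a finite group `G` and every prime `p`, there is a
`p`-quasielementary subgroup `Q ≤ G` such that the (integer) value at `g` of the
character induced from the trivial character of `Q` is not divisible by `p`. -/
theorem exists_quasielementary_induced_value_not_dvd
    {G : Type*} [Group G] [Fintype G] (g : G) (p : ℕ) (hp : p.Prime) :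
    ∃ Q : Subgroup G, IsPQuasiElementary p ↥Q ∧
      ∃ m : ℕ, indClassFun Q (fun _ => (1 : ℂ)) g = (m : ℂ) ∧ ¬ p ∣ m := by
  obtain ⟨Q, hQ, hdvd⟩ := exists_isPQuasiElementary_not_dvd_card_fixedPoints g hp
  exact ⟨Q, hQ, _, indClassFun_one_eq_card_fixedPoints Q g, hdvd⟩
end

section
/- Let G be a finite group and suppose a group A acts on the set Irr(G) of irreducible complex characters of G and on the set of conjugacy classes of G in such a way that (a•χ)(y) = χ(x) whenever a ∈ A, χ ∈ Irr(G), x lies in a conjugacy class K, and y lies in the class a•K. Then (i) for every a ∈ A, the number of irreducible characters fixed by a equals the number of conjugacy classes fixed by a; and (ii) the number of A-orbits on Irr(G) equals the number of A-orbits on the set of conjugacy classes of G. -/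
theorem LinearMap.trace_eq_card_fixedPoints_of_basis {R M ι : Type*} [CommRing R] [AddCommGroup M]
    [Module R M] [Finite ι] (b : Module.Basis ι R M) (σ : Equiv.Perm ι) (f : Module.End R M)
    (hf : ∀ i, f (b i) = b (σ i)) : LinearMap.trace R M f = Nat.card {i // σ i = i} := by
  classical
  have := Fintype.ofFinite ι
  rw [LinearMap.trace_eq_matrix_trace R b, Matrix.trace, Nat.card_eq_fintype_card,
    Fintype.card_subtype, ← Finset.sum_boole]
  refine Finset.sum_congr rfl fun i _ => ?_
  rw [Matrix.diag_apply, LinearMap.toMatrix_apply, hf, Module.Basis.repr_self,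
    Finsupp.single_apply]

namespace MulAction

theorem orbitRel_eq_of_surjective {A B X : Type*} [Group A] [Group B] [MulAction A X]
    [MulAction B X] (f : A → B) (hf : Function.Surjective f)
    (hsmul : ∀ (a : A) (x : X), f a • x = a • x) : orbitRel A X = orbitRel B X := by
  ext x y
  simp only [orbitRel_apply, mem_orbit_iff]
  constructor
  · rintro ⟨a, rfl⟩
    exact ⟨f a, hsmul a y⟩
  · rintro ⟨b, rfl⟩
    obtain ⟨a, rfl⟩ := hf b
    exact ⟨a, (hsmul a y).symm⟩

theorem card_orbits_eq_of_card_fixed_eq {A X Y : Type*} [Group A] [MulAction A X]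
    [MulAction A Y] [Finite X] [Finite Y]
    (h : ∀ a : A, Nat.card {x : X // a • x = x} = Nat.card {y : Y // a • y = y}) :
    Nat.card (orbitRel.Quotient A X) = Nat.card (orbitRel.Quotient A Y) := by
  classical
  let Φ := (toPermHom A X).prod (toPermHom A Y)
  let B := Φ.range
  let _ : MulAction B X := compHom X ((MonoidHom.fst _ _).comp B.subtype)
  let _ : MulAction B Y := compHom Y ((MonoidHom.snd _ _).comp B.subtype)
  have hX : orbitRel A X = orbitRel B X :=
    orbitRel_eq_of_surjective _ Φ.rangeRestrict_surjective fun _ _ => rfl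
  have hY : orbitRel A Y = orbitRel B Y :=
    orbitRel_eq_of_surjective _ Φ.rangeRestrict_surjective fun _ _ => rfl
  have := Fintype.ofFinite X
  have := Fintype.ofFinite Y
  have := Fintype.ofFinite B
  have hfixed : ∀ b : B, Fintype.card (fixedBy X b) = Fintype.card (fixedBy Y b) := by
    rintro ⟨_, a, rfl⟩
    rw [← Nat.card_eq_fintype_card, ← Nat.card_eq_fintype_card]
    exact h a
  have hB := sum_card_fixedBy_eq_card_orbits_mul_card_group B X
  rw [Finset.sum_congr rfl fun b _ => hfixed b,
    sum_card_fixedBy_eq_card_orbits_mul_card_group B Y] at hB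
  change Nat.card (Quotient (orbitRel A X)) = Nat.card (Quotient (orbitRel A Y))
  rw [hX, hY, Nat.card_eq_fintype_card, Nat.card_eq_fintype_card]
  exact (Nat.eq_of_mul_eq_mul_right Fintype.card_pos hB).symm

end MulAction

namespace Representation

section CommSemiring

variable {k G M : Type*} [CommSemiring k] [Monoid G] [AddCommMonoid M] [Module k M]
  [Module (MonoidAlgebra k G) M] [IsScalarTower k (MonoidAlgebra k G) M]

theorem ofModule'_apply (g : G) (m : M) :
    ofModule' (k := k) M g m = MonoidAlgebra.single g (1 : k) • m := by
  simp [ofModule']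

theorem asAlgebraHom_ofModule' :
    (ofModule' (k := k) (G := G) M).asAlgebraHom = Algebra.lsmul k k M :=
  (MonoidAlgebra.lift k _ G).apply_symm_apply _

end CommSemiring

theorem isIrreducible_ofModule' {k G M : Type*} [Field k] [Monoid G] [AddCommGroup M]
    [Module k M] [Module (MonoidAlgebra k G) M] [IsScalarTower k (MonoidAlgebra k G) M]
    [IsSimpleModule (MonoidAlgebra k G) M] :
    (ofModule' (k := k) (G := G) M).IsIrreducible := by
  rw [irreducible_iff_isSimpleModule_asModule]
  exact IsSimpleModule.congr
    { (ofModule' (k := k) (G := G) M).asModuleEquiv with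
      map_smul' := fun r m => by simp [asModuleEquiv_map_smul, asAlgebraHom_ofModule'] }

end Representation

theorem FDRep.simple_of_isIrreducible {k G V : Type} [Field k] [IsAlgClosed k] [CharZero k]
    [Group G] [Fintype G] [AddCommGroup V] [Module k V] [FiniteDimensional k V]
    (ρ : Representation k G V) [ρ.IsIrreducible] : CategoryTheory.Simple (FDRep.of ρ) := by
  have := invertibleOfNonzero (NeZero.ne (Nat.card G : k))
  rw [FDRep.simple_iff_char_is_norm_one]
  have h := ρ.char_orthonormal ρ
  rw [if_pos ⟨Representation.Equiv.refl ρ⟩, inv_mul_eq_one₀ (NeZero.ne _)] at h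
  exact h.symm

theorem isIrredChar_character {G V : Type} [Group G] [Fintype G] [AddCommGroup V] [Module ℂ V]
    [FiniteDimensional ℂ V] (ρ : Representation ℂ G V) [ρ.IsIrreducible] :
    IsIrredChar G ρ.character :=
  ⟨FDRep.of ρ, FDRep.simple_of_isIrreducible ρ, rfl⟩

abbrev IrrChar (G : Type) [Monoid G] := {χ : G → ℂ // IsIrredChar G χ}

namespace IsIrredChar

variable {G : Type} [Group G] {χ ψ : G → ℂ}

theorem apply_eq_of_isConj (hχ : IsIrredChar G χ) {g h : G} (hgh : IsConj g h) : χ g = χ h := by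
  obtain ⟨V, -, rfl⟩ := hχ
  obtain ⟨c, rfl⟩ := isConj_iff.mp hgh
  exact (FDRep.char_conj V g c).symm

variable [Fintype G]

theorem sum_mul_inv_self (hχ : IsIrredChar G χ) : ∑ g, χ g * χ g⁻¹ = Nat.card G := by
  obtain ⟨V, hV, rfl⟩ := hχ
  exact (FDRep.simple_iff_char_is_norm_one V).mp hV

theorem sum_mul_inv_eq_zero (hχ : IsIrredChar G χ) (hψ : IsIrredChar G ψ) (hne : χ ≠ ψ) :
    ∑ g, χ g * ψ g⁻¹ = 0 := by
  obtain ⟨V, hV, rfl⟩ := hχ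
  obtain ⟨W, hW, rfl⟩ := hψ
  have := invertibleOfNonzero (NeZero.ne (Nat.card G : ℂ))
  have h := FDRep.char_orthonormal V W
  rw [if_neg fun ⟨i⟩ => hne (FDRep.char_iso i)] at h
  exact (mul_eq_zero.mp h).resolve_left (inv_ne_zero (NeZero.ne _))

end IsIrredChar

namespace IrrChar

variable {G : Type} [Group G]

def classFun (χ : IrrChar G) : ConjClasses G → ℂ :=
  Quotient.lift χ.1 fun _ _ => χ.2.apply_eq_of_isConj

@[simp]
theorem classFun_mk (χ : IrrChar G) (g : G) : χ.classFun (ConjClasses.mk g) = χ.1 g := rfl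

theorem classFun_smul {A : Type*} [Group A] [MulAction A (IrrChar G)]
    [MulAction A (ConjClasses G)]
    (hcompat : ∀ (a : A) (χ : IrrChar G) (K : ConjClasses G) (x y : G),
      x ∈ K.carrier → y ∈ (a • K).carrier → (a • χ).1 y = χ.1 x) (a : A) (χ : IrrChar G) :
    (a • χ).classFun = fun K => χ.classFun (a⁻¹ • K) := by
  ext K
  obtain ⟨y, rfl⟩ := ConjClasses.mk_surjective K
  obtain ⟨x, hx⟩ := ConjClasses.mk_surjective (a⁻¹ • ConjClasses.mk y)
  rw [← hx, classFun_mk, classFun_mk]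
  refine hcompat a χ _ x y (ConjClasses.mem_carrier_iff_mk_eq.mpr rfl) ?_
  rw [hx, smul_inv_smul]
  exact ConjClasses.mem_carrier_iff_mk_eq.mpr rfl

end IrrChar

section ClassFunctions

variable {G : Type} [Group G] [Fintype G]

def classFunPairing : LinearMap.BilinForm ℂ (ConjClasses G → ℂ) :=
  LinearMap.mk₂ ℂ (fun φ ψ => ∑ g : G, φ (ConjClasses.mk g) * ψ (ConjClasses.mk g⁻¹))
    (fun _ _ _ => by simp [add_mul, Finset.sum_add_distrib])
    (fun _ _ _ => by simp [mul_assoc, Finset.mul_sum])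
    (fun _ _ _ => by simp [mul_add, Finset.sum_add_distrib])
    (fun _ _ _ => by simp [mul_left_comm, Finset.mul_sum])

theorem classFunPairing_apply (φ ψ : ConjClasses G → ℂ) :
    classFunPairing φ ψ = ∑ g : G, φ (ConjClasses.mk g) * ψ (ConjClasses.mk g⁻¹) := rfl

namespace IrrChar

theorem classFunPairing_classFun (χ ψ : IrrChar G) :
    classFunPairing χ.classFun ψ.classFun = if χ = ψ then (Nat.card G : ℂ) else 0 := by
  simp only [classFunPairing_apply, classFun_mk]
  split_ifs with h
  · exact h ▸ χ.2.sum_mul_inv_self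
  · exact χ.2.sum_mul_inv_eq_zero ψ.2 (Subtype.coe_injective.ne h)

theorem linearIndependent_classFun : LinearIndependent ℂ (classFun (G := G)) := by
  refine LinearMap.BilinForm.linearIndependent_of_iIsOrtho (B := classFunPairing) ?_ ?_
  · intro χ ψ hne
    show classFunPairing χ.classFun ψ.classFun = 0
    simp [classFunPairing_classFun, hne]
  · intro χ
    simp [classFunPairing_classFun]

instance : Finite (IrrChar G) := linearIndependent_classFun.finite

end IrrChar

section ClassSum

variable {k : Type*} [CommSemiring k]

noncomputable def classSum (φ : ConjClasses G → k) : MonoidAlgebra k G :=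
  ∑ g : G, MonoidAlgebra.single g⁻¹ (φ (ConjClasses.mk g))

theorem commute_classSum_of (φ : ConjClasses G → k) (h : G) :
    Commute (classSum φ) (MonoidAlgebra.of k G h) := by
  simp only [Commute, SemiconjBy, classSum, MonoidAlgebra.of_apply, Finset.sum_mul,
    Finset.mul_sum, MonoidAlgebra.single_mul_single, mul_one, one_mul]
  refine Fintype.sum_equiv (MulAut.conj h⁻¹).toEquiv _ _ fun g => ?_
  have hconj : ConjClasses.mk (h⁻¹ * g * h⁻¹⁻¹) = ConjClasses.mk g :=
    ConjClasses.mk_eq_mk_iff_isConj.mpr (isConj_iff.mpr ⟨h, by group⟩)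
  simp only [MulEquiv.toEquiv_eq_coe, EquivLike.coe_coe, MulAut.conj_apply, hconj]
  congr 1
  group

theorem commute_classSum (φ : ConjClasses G → k) (a : MonoidAlgebra k G) :
    Commute (classSum φ) a := by
  induction a using MonoidAlgebra.induction_on with
  | of h => exact commute_classSum_of φ h
  | add x y hx hy => exact hx.add_right hy
  | smul r x hx => exact hx.smul_right r

noncomputable def classSumLSMul (φ : ConjClasses G → k) (M : Type*) [AddCommMonoid M]
    [Module (MonoidAlgebra k G) M] : Module.End (MonoidAlgebra k G) M where
  toFun m := classSum φ • m
  map_add' := smul_add _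
  map_smul' a m := by
    rw [smul_smul, (commute_classSum φ a).eq, mul_smul]
    rfl

theorem classSum_smul_eq_sum {M : Type*} [AddCommMonoid M] [Module k M]
    [Module (MonoidAlgebra k G) M] [IsScalarTower k (MonoidAlgebra k G) M]
    (φ : ConjClasses G → k) (m : M) :
    classSum φ • m = ∑ g : G, φ (ConjClasses.mk g) • Representation.ofModule' (k := k) M g⁻¹ m := by
  simp only [classSum, Finset.sum_smul, Representation.ofModule'_apply]
  refine Finset.sum_congr rfl fun g _ => ?_
  rw [← smul_assoc, MonoidAlgebra.smul_single', mul_one]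

end ClassSum

theorem classSum_smul_eq_zero {M : Type} [AddCommGroup M] [Module ℂ M]
    [Module (MonoidAlgebra ℂ G) M] [IsScalarTower ℂ (MonoidAlgebra ℂ G) M]
    [IsSimpleModule (MonoidAlgebra ℂ G) M] [FiniteDimensional ℂ M] (φ : ConjClasses G → ℂ)
    (hφ : ∀ χ : IrrChar G, classFunPairing φ χ.classFun = 0) (m : M) :
    classSum φ • m = 0 := by
  have : Nontrivial M := IsSimpleModule.nontrivial (MonoidAlgebra ℂ G) M
  have := Representation.isIrreducible_ofModule' (k := ℂ) (G := G) (M := M)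
  obtain ⟨c, hc⟩ := (IsSimpleModule.algebraMap_end_bijective_of_isAlgClosed ℂ
    (A := MonoidAlgebra ℂ G) (V := M)).2 (classSumLSMul φ M)
  have hsmul : ∀ m : M, classSum φ • m = c • m := fun m => (LinearMap.congr_fun hc m).symm
  have htrace : c * Module.finrank ℂ M = 0 := by
    have hlin : c • (LinearMap.id : Module.End ℂ M) =
        ∑ g : G, φ (ConjClasses.mk g) • Representation.ofModule' (k := ℂ) M g⁻¹ := by
      ext m
      simp [← hsmul, classSum_smul_eq_sum]
    have := congrArg (LinearMap.trace ℂ M) hlin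
    simp only [map_smul, LinearMap.trace_id, map_sum, smul_eq_mul] at this
    rw [this]
    exact hφ ⟨_, isIrredChar_character (Representation.ofModule' (k := ℂ) (G := G) M)⟩
  have hc0 : c = 0 := (mul_eq_zero.mp htrace).resolve_right (by simp [Module.finrank_pos.ne'])
  rw [hsmul, hc0, zero_smul]

namespace IrrChar

theorem eq_zero_of_forall_classFunPairing_eq_zero (φ : ConjClasses G → ℂ)
    (hφ : ∀ χ : IrrChar G, classFunPairing φ χ.classFun = 0) : φ = 0 := by
  have hker : ⊤ ≤ LinearMap.ker (classSumLSMul φ (MonoidAlgebra ℂ G)) := by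
    rw [← IsSemisimpleModule.sSup_simples_eq_top]
    refine sSup_le fun S (hS : IsSimpleModule _ S) x hx => ?_
    exact congrArg Subtype.val (classSum_smul_eq_zero φ hφ (⟨x, hx⟩ : S))
  have hz : classSum φ = 0 := by
    simpa [classSumLSMul] using hker (Submodule.mem_top (x := 1))
  ext K
  obtain ⟨g, rfl⟩ := ConjClasses.mk_surjective K
  have := congrArg (fun z : MonoidAlgebra ℂ G => z.coeff g⁻¹) hz
  rw [classSum, MonoidAlgebra.coeff_sum, Finsupp.finsetSum_apply,
    Finset.sum_eq_single_of_mem g (Finset.mem_univ g)] at this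
  · simpa using this
  · intro h _ hne
    exact Finsupp.single_eq_of_ne (inv_injective.ne hne.symm)

theorem card_eq_card_conjClasses : Nat.card (IrrChar G) = Nat.card (ConjClasses G) := by
  have := Fintype.ofFinite (IrrChar G)
  have := Fintype.ofFinite (ConjClasses G)
  let pairings : (ConjClasses G → ℂ) →ₗ[ℂ] IrrChar G → ℂ :=
    LinearMap.pi fun χ => classFunPairing.flip χ.classFun
  have hinj : Function.Injective pairings := by
    rw [← LinearMap.ker_eq_bot, LinearMap.ker_eq_bot']
    exact fun φ hφ => eq_zero_of_forall_classFunPairing_eq_zero φ (congrFun hφ)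
  have hle := (linearIndependent_classFun (G := G)).fintype_card_le_finrank
  have hge := LinearMap.finrank_le_finrank_of_injective hinj
  simp only [Module.finrank_fintype_fun_eq_card] at hle hge
  rw [Nat.card_eq_fintype_card, Nat.card_eq_fintype_card]
  exact le_antisymm hle hge

noncomputable def classFunBasis : Module.Basis (IrrChar G) ℂ (ConjClasses G → ℂ) :=
  have := Fintype.ofFinite (IrrChar G)
  have := Fintype.ofFinite (ConjClasses G)
  basisOfLinearIndependentOfCardEqFinrank' _ linearIndependent_classFun <| by
    rw [Module.finrank_fintype_fun_eq_card, ← Nat.card_eq_fintype_card,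
      ← Nat.card_eq_fintype_card, card_eq_card_conjClasses]

@[simp]
theorem coe_classFunBasis : ⇑(classFunBasis (G := G)) = classFun := by
  unfold classFunBasis
  exact Module.Basis.coe_mk _ _

theorem card_fixed_eq_card_fixed_conjClasses {A : Type*} [Group A]
    [MulAction A (IrrChar G)] [MulAction A (ConjClasses G)]
    (hcompat : ∀ (a : A) (χ : IrrChar G) (K : ConjClasses G) (x y : G),
      x ∈ K.carrier → y ∈ (a • K).carrier → (a • χ).1 y = χ.1 x) (a : A) :
    Nat.card {χ : IrrChar G // a • χ = χ} = Nat.card {K : ConjClasses G // a • K = K} := by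
  classical
  let τ : Module.End ℂ (ConjClasses G → ℂ) := LinearMap.funLeft ℂ ℂ (a⁻¹ • ·)
  have hχ : ∀ χ, τ (classFunBasis χ) = classFunBasis (a • χ) := fun χ => by
    rw [coe_classFunBasis, classFun_smul hcompat a χ]
    rfl
  have hK : ∀ K, τ (Pi.basisFun ℂ _ K) = Pi.basisFun ℂ _ (a • K) := fun K => by
    ext L
    change Pi.basisFun ℂ _ K (a⁻¹ • L) = _
    simp only [Pi.basisFun_apply, Pi.single_apply, inv_smul_eq_iff]
  have h₁ := LinearMap.trace_eq_card_fixedPoints_of_basis _ (MulAction.toPerm a) τ hχ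
  have h₂ := LinearMap.trace_eq_card_fixedPoints_of_basis _ (MulAction.toPerm a) τ hK
  exact_mod_cast h₁.symm.trans h₂

end IrrChar

end ClassFunctions

/-- **Brauer's permutation lemma.** Suppose a group `A` acts on the set of irreducible
complex characters of a finite group `G` and on the set of its conjugacy classes
compatibly, i.e. `(a • χ) y = χ x` whenever `x` lies in a class `K` and `y` lies in the
class `a • K`. Then (i) every `a ∈ A` fixes as many irreducible characters as conjugacy
classes, and (ii) `A` has as many orbits on the irreducible characters as on the
conjugacy classes. -/
theorem brauer_permutation_lemma {G : Type} [Group G] [Fintype G]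
    (A : Type*) [Group A]
    [MulAction A {χ : G → ℂ // IsIrredChar G χ}]
    [MulAction A (ConjClasses G)]
    (hcompat : ∀ (a : A) (χ : {χ : G → ℂ // IsIrredChar G χ}) (K : ConjClasses G)
      (x y : G), x ∈ K.carrier → y ∈ (a • K).carrier →
        ((a • χ : {χ : G → ℂ // IsIrredChar G χ}) : G → ℂ) y = (χ : G → ℂ) x) :
    (∀ a : A,
      Nat.card {χ : {χ : G → ℂ // IsIrredChar G χ} // a • χ = χ} =
        Nat.card {K : ConjClasses G // a • K = K}) ∧
    Nat.card (MulAction.orbitRel.Quotient A {χ : G → ℂ // IsIrredChar G χ}) =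
      Nat.card (MulAction.orbitRel.Quotient A (ConjClasses G)) := by
  have hfixed := IrrChar.card_fixed_eq_card_fixed_conjClasses hcompat
  exact ⟨hfixed, MulAction.card_orbits_eq_of_card_fixed_eq hfixed⟩
end

section
/- Every finite M-group is solvable, where a finite group G is an M-group if every irreducible complex character χ of G is monomial, i.e., χ = λ^G for some subgroup H ≤ G and some linear character λ of H. -/
/-!
Taketa's argument. If `χ = λ^G` is irreducible with `λ` a linear character of `H`, then
`χ 1 = [G : H]`. By induction on `n = χ 1` we show that `G⁽ⁿ⁾` lies in the kernel of `χ`. The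
permutation character of `G` on `G ⧸ H` is the trivial character plus characters of degree
`< n`, so by induction `G⁽ⁿ⁻¹⁾` fixes every coset, i.e. `G⁽ⁿ⁻¹⁾ ≤ H`. Hence
`G⁽ⁿ⁾ ≤ ⁅H, H⁆ ≤ ker λ`, and as `G⁽ⁿ⁾` is normal, `χ = [G : H]` on it. Applied to the
constituents of the regular representation this gives `G⁽ᴺ⁾ = 1` for `N = |G|`.

Characters are compared along composition series, using only that the trace is additive on a
subrepresentation and its quotient, so no complete reducibility is needed.
-/

open scoped Classical

/-- `lam` is a linear character: a multiplicative function into `ℂˣ`, i.e. a degree-one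
character. -/
def IsLinearChar {H : Type*} [Group H] (lam : H → ℂ) : Prop :=
  lam 1 = 1 ∧ ∀ a b : H, lam (a * b) = lam a * lam b

universe u

open CategoryTheory Module LinearMap

theorem LinearMap.trace_eq_trace_restrict_add_trace_mapQ {K V : Type*} [Field K] [AddCommGroup V]
    [Module K V] [FiniteDimensional K V] (p : Submodule K V) (f : V →ₗ[K] V)
    (hf : p ≤ p.comap f) :
    trace K V f = trace K p (f.restrict hf) + trace K (V ⧸ p) (p.mapQ p f hf) := by
  -- A section `s` of `p.mkQ` splits `id` as `p.subtype ∘ r + s ∘ p.mkQ`; cyclicity of the trace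
  -- moves the two summands to `p` and to `V ⧸ p`.
  obtain ⟨s, hs⟩ := p.mkQ.exists_rightInverse_of_surjective p.range_mkQ
  have hs' (y : V ⧸ p) : p.mkQ (s y) = y := LinearMap.congr_fun hs y
  let r : V →ₗ[K] p := (id - s ∘ₗ p.mkQ).codRestrict p fun v =>
    (Submodule.Quotient.mk_eq_zero p).mp (by simpa [sub_eq_zero] using (hs' (p.mkQ v)).symm)
  have hid : p.subtype ∘ₗ r + s ∘ₗ p.mkQ = id := by ext v; simp [r]
  have hrestrict : f.restrict hf = r ∘ₗ f ∘ₗ p.subtype := by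
    ext x
    simp [r, (Submodule.Quotient.mk_eq_zero p).mpr (hf x.2)]
  have hmapQ : p.mapQ p f hf = p.mkQ ∘ₗ f ∘ₗ s := LinearMap.ext fun y => by
    conv_lhs => rw [← hs' y]
    rfl
  calc trace K V f = trace K V ((f ∘ₗ p.subtype) ∘ₗ r) + trace K V ((f ∘ₗ s) ∘ₗ p.mkQ) := by
        rw [← map_add, comp_assoc, comp_assoc, ← comp_add, hid, comp_id]
    _ = trace K p (r ∘ₗ f ∘ₗ p.subtype) + trace K (V ⧸ p) (p.mkQ ∘ₗ f ∘ₗ s) := by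
        rw [trace_comp_comm' (f ∘ₗ p.subtype) r, trace_comp_comm' (f ∘ₗ s) p.mkQ, comp_assoc,
          comp_assoc]
    _ = _ := by rw [hrestrict, hmapQ]

namespace Subrepresentation

variable {k G V : Type*} [Field k] [Monoid G] [AddCommGroup V] [Module k V]
  {ρ : Representation k G V}

noncomputable abbrev quotient (p : Subrepresentation ρ) :
    Representation k G (V ⧸ p.toSubmodule) :=
  ρ.quotient p.toSubmodule fun g _ hv => p.apply_mem_toSubmodule g hv

theorem character_add_character_quotient [FiniteDimensional k V]
    (p : Subrepresentation ρ) (g : G) :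
    p.toRepresentation.character g + p.quotient.character g = ρ.character g :=
  (trace_eq_trace_restrict_add_trace_mapQ _ _ fun _ hv => p.apply_mem_toSubmodule g hv).symm

end Subrepresentation

namespace FDRep

variable {k G : Type*} [Field k] [Monoid G]

theorem simple_of_isIrreducible_s19 (V : FDRep k G) [Representation.IsIrreducible V.ρ] : Simple V := by
  have : IsSimpleModule (MonoidAlgebra k G) (Representation.asModule V.ρ) :=
    (Representation.irreducible_iff_isSimpleModule_asModule _).mp inferInstance
  have : Simple (ModuleCat.of (MonoidAlgebra k G) (Representation.asModule V.ρ)) :=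
    simple_of_isSimpleModule
  have : Simple ((forget₂ (FDRep k G) (Rep k G)).obj V) :=
    (simple_obj_iff Rep.toModuleMonoidAlgebra _).mp this
  exact (forget₂ (FDRep k G) (Rep k G)).simple_of_simple_obj V

theorem character_eq_of_forall_simple {a b : G} {n : ℕ}
    (hsimple : ∀ W : FDRep k G, Simple W → finrank k W ≤ n → W.character a = W.character b)
    (V : FDRep k G) (hV : finrank k V ≤ n) : V.character a = V.character b := by
  induction hd : finrank k V using Nat.strong_induction_on generalizing V with
  | _ d ih =>
  have hdn : d ≤ n := hd ▸ hV
  by_cases hsplit : ∃ p : Subrepresentation V.ρ, p ≠ ⊥ ∧ p ≠ ⊤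
  · obtain ⟨p, hbot, htop⟩ := hsplit
    have hsub : finrank k p.toSubmodule < d :=
      hd ▸ Submodule.finrank_lt fun h => htop (Subrepresentation.toSubmodule_injective h)
    have hquot : finrank k (V ⧸ p.toSubmodule) < d := by
      have := p.toSubmodule.finrank_quotient_add_finrank
      have : 0 < finrank k p.toSubmodule := Nat.pos_of_ne_zero fun h =>
        hbot (Subrepresentation.toSubmodule_injective (Submodule.finrank_eq_zero.mp h))
      omega
    change Representation.character V.ρ a = Representation.character V.ρ b
    rw [← p.character_add_character_quotient, ← p.character_add_character_quotient]
    exact congrArg₂ (· + ·) (ih _ hsub (FDRep.of p.toRepresentation) (hsub.le.trans hdn) rfl)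
      (ih _ hquot (FDRep.of p.quotient) (hquot.le.trans hdn) rfl)
  push Not at hsplit
  cases subsingleton_or_nontrivial V
  · exact congrArg (trace k V) (Subsingleton.elim (V.ρ a) (V.ρ b))
  have : Representation.IsIrreducible V.ρ :=
    { exists_pair_ne := ⟨⊥, ⊤, fun h => bot_ne_top (congrArg Subrepresentation.toSubmodule h)⟩
      eq_bot_or_eq_top := fun p => or_iff_not_imp_left.mpr (hsplit p) }
  exact hsimple V (simple_of_isIrreducible_s19 V) hV

end FDRep

namespace Representation

variable (k : Type*) [Field k] (G : Type*) [Group G] (X : Type*) [MulAction G X]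

noncomputable def ofMulActionFun : Representation k G (X → k) where
  toFun g := funLeft k k (g⁻¹ • ·)
  map_one' := by ext; simp
  map_mul' g h := by ext; simp [mul_smul]

variable {k G X}

theorem ofMulActionFun_apply (g : G) (f : X → k) (x : X) :
    ofMulActionFun k G X g f x = f (g⁻¹ • x) :=
  rfl

theorem character_ofMulActionFun [Fintype X] (g : G) :
    (ofMulActionFun k G X).character g = ∑ x : X, if g • x = x then 1 else 0 := by
  rw [character, trace_eq_matrix_trace k (Pi.basisFun k X), Matrix.trace]
  refine Finset.sum_congr rfl fun x _ => ?_
  simp [ofMulActionFun_apply, Pi.single_apply, inv_smul_eq_iff, eq_comm (a := x)]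

theorem smul_eq_self_of_character_eq [Fintype X] [CharZero k] {g : G}
    (hg : (ofMulActionFun k G X).character g = (ofMulActionFun k G X).character 1) (x : X) :
    g • x = x := by
  simp only [character_ofMulActionFun, one_smul, if_true, Finset.sum_boole] at hg
  have : (Finset.univ.filter fun x : X => g • x = x) = Finset.univ :=
    Finset.eq_univ_of_card _ (by simpa using hg)
  simpa using Finset.ext_iff.mp this x

end Representation

theorem Subgroup.mem_of_forall_simple_character_eq {k G : Type u} [Field k] [CharZero k] [Group G]
    {H : Subgroup G} [H.FiniteIndex] {a : G} {n : ℕ} (hn : 1 ≤ n) (hH : H.index ≤ n + 1)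
    (ha : ∀ W : FDRep k G, Simple W → finrank k W ≤ n → W.character a = W.character 1) :
    a ∈ H := by
  have : Fintype (G ⧸ H) := Fintype.ofFinite _
  let ρ := Representation.ofMulActionFun k G (G ⧸ H)
  let p : Subrepresentation ρ := ⟨k ∙ 1, fun g v hv => by
    obtain ⟨c, rfl⟩ := Submodule.mem_span_singleton.mp hv
    exact Submodule.mem_span_singleton.mpr ⟨c, rfl⟩⟩
  -- Splitting off the constants leaves constituents of degree at most `[G : H] - 1`.
  have hsub : finrank k p.toSubmodule = 1 := finrank_span_singleton one_ne_zero
  have hquot : finrank k ((G ⧸ H → k) ⧸ p.toSubmodule) ≤ n := by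
    have := p.toSubmodule.finrank_quotient_add_finrank
    rw [hsub, finrank_fintype_fun_eq_card, ← Nat.card_eq_fintype_card] at this
    rw [Subgroup.index] at hH
    omega
  have hρ : ρ.character a = ρ.character 1 := by
    rw [← p.character_add_character_quotient, ← p.character_add_character_quotient]
    exact congrArg₂ (· + ·)
      (FDRep.character_eq_of_forall_simple ha (FDRep.of p.toRepresentation) (hsub ▸ hn))
      (FDRep.character_eq_of_forall_simple ha (FDRep.of p.quotient) hquot)
  simpa [QuotientGroup.eq] using Representation.smul_eq_self_of_character_eq hρ ((1 : G) : G ⧸ H)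

theorem IsLinearChar.apply_eq_one_of_mem_commutator {H : Type*} [Group H] {lam : H → ℂ}
    (hlam : IsLinearChar lam) {a : H} (ha : a ∈ commutator H) : lam a = 1 :=
  congrArg Units.val (Abelianization.commutator_subset_ker (MonoidHom.toHomUnits
    { toFun := lam, map_one' := hlam.1, map_mul' := hlam.2 }) ha)

theorem indClassFun_eq_index {G : Type*} [Group G] [Fintype G] {H : Subgroup G} {φ : H → ℂ}
    {g : G} (hg : ∀ x : G, ∃ y : H, (y : G) = x * g * x⁻¹ ∧ φ y = 1) :
    indClassFun H φ g = H.index := by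
  have hterm (x : G) : (if h : x * g * x⁻¹ ∈ H then φ ⟨_, h⟩ else 0) = 1 := by
    obtain ⟨⟨y, hyH⟩, rfl, hy⟩ := hg x
    exact (dif_pos hyH).trans hy
  simp only [indClassFun, hterm, Finset.sum_const, Finset.card_univ, nsmul_one]
  rw [← Nat.card_eq_fintype_card, ← H.index_mul_card, Nat.cast_mul]
  field_simp

def IsMGroup (G : Type) [Group G] [Fintype G] : Prop :=
  ∀ χ : G → ℂ, IsIrredChar G χ →
    ∃ (H : Subgroup G) (lam : ↥H → ℂ), IsLinearChar lam ∧ χ = indClassFun H lam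

namespace IsMGroup

variable {G : Type} [Group G] [Fintype G]

theorem character_eq_of_mem_derivedSeries (hG : IsMGroup G) (V : FDRep ℂ G) [Simple V] {g : G}
    (hg : g ∈ derivedSeries G (finrank ℂ V)) : V.character g = V.character 1 := by
  induction hV : finrank ℂ V using Nat.strong_induction_on generalizing V g with
  | _ d ih =>
  obtain ⟨H, lam, hlam, hχ⟩ := hG V.character ⟨V, ‹_›, rfl⟩
  have hdeg : V.character 1 = H.index :=
    hχ ▸ indClassFun_eq_index fun x => ⟨1, by simp, hlam.1⟩
  have hd : d = H.index := by rw [← hV]; exact_mod_cast V.char_one ▸ hdeg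
  have hH : derivedSeries G (H.index - 1) ≤ H := by
    obtain h1 | h2 : H.index = 1 ∨ 2 ≤ H.index := by
      have := H.index_ne_zero_of_finite
      omega
    · rw [Subgroup.index_eq_one.mp h1]
      exact le_top
    · intro a ha
      refine H.mem_of_forall_simple_character_eq (n := H.index - 1) (by omega) (by omega)
        fun W hW hWn => ih _ (by omega) W (derivedSeries_antitone G hWn ha) rfl
  rw [hdeg, hχ]
  refine indClassFun_eq_index fun x => ?_
  have hconj : x * g * x⁻¹ ∈ ⁅H, H⁆ := by
    have : derivedSeries G d ≤ ⁅H, H⁆ := by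
      rw [hd, ← Nat.sub_one_add_one H.index_ne_zero_of_finite, derivedSeries_succ]
      exact Subgroup.commutator_mono hH hH
    exact this ((derivedSeries_normal G d).conj_mem g (hV ▸ hg) x)
  rw [← H.map_subtype_commutator] at hconj
  obtain ⟨y, hy, hyx⟩ := hconj
  exact ⟨y, hyx, hlam.apply_eq_one_of_mem_commutator hy⟩

theorem isSolvable (hG : IsMGroup G) : Group.IsSolvable G := by
  refine ⟨Nat.card G, (Subgroup.eq_bot_iff_forall _).mpr fun a ha => ?_⟩
  have : a ∈ (⊥ : Subgroup G) :=
    Subgroup.mem_of_forall_simple_character_eq (k := ℂ) (n := Nat.card G) Nat.card_pos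
      (by simp [Subgroup.index_bot]) fun W _ hW =>
        hG.character_eq_of_mem_derivedSeries W (derivedSeries_antitone G hW ha)
  simpa using this

end IsMGroup

/-- **Taketa's theorem.** Every finite `M`-group is solvable: if every irreducible complex
character of the finite group `G` is monomial (induced from a linear character of some
subgroup), then `G` is solvable. -/
theorem m_group_is_solvable {G : Type} [Group G] [Fintype G]
    (hM : ∀ χ : G → ℂ, IsIrredChar G χ →
      ∃ (H : Subgroup G) (lam : ↥H → ℂ), IsLinearChar lam ∧ χ = indClassFun H lam) :
    IsSolvable G :=
  IsMGroup.isSolvable hM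
end
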